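/- Let A be an NFA with finite state set Q and finite alphabet Σ, and let Split(A) be the PFA on Q whose alphabet consists of all partial maps x : Q → Q ∪ {⊥} such that there exists y ∈ Σ with x(q) ∈ δ(q,y) whenever x(q) ≠ ⊥. Then A is D3-directing if and only if Split(A) carefully synchronizes its full state set Q, and in that case the shortest D3-directing word of A has the same length as the shortest word carefully synchronizing Q in Split(A), i.e., d₃(A) = d₃(Split(A)). -/

import Mathlib

/-- Action of an NFA transition function on a subset of states along a word. -/
def nfaRun {n m : ℕ} (δ : Fin n → Fin m → Finset (Fin n)) :
    Finset (Fin n) → List (Fin m) → Finset (Fin n)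
  | S, [] => S
  | S, a :: w => nfaRun δ (S.biUnion fun q => δ q a) w

/-- The word `w` is D3-directing for the NFA `δ`:
the intersection `⋂_{q ∈ Q} q·w` is nonempty. -/
def nfaD3word {n m : ℕ} (δ : Fin n → Fin m → Finset (Fin n)) (w : List (Fin m)) : Prop :=
  ∃ r : Fin n, ∀ q : Fin n, r ∈ nfaRun δ {q} w

/-- Action on subsets of a word whose letters are partial maps `Fin n → Option (Fin n)`
(the symbols of a PFA): one step maps `S` to `{x q : q ∈ S}` if `x q` is defined for
all `q ∈ S`, and to `∅` otherwise. -/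
def pfaRunF {n : ℕ} :
    Finset (Fin n) → List (Fin n → Option (Fin n)) → Finset (Fin n)
  | S, [] => S
  | S, x :: w =>
      pfaRunF (if ∀ q ∈ S, (x q).isSome then S.image (fun q => (x q).getD q) else ∅) w

/-- `x` is a symbol of `Split(A)`: a partial map lying below some symbol `y` of `A`. -/
def splitSym {n m : ℕ} (δ : Fin n → Fin m → Finset (Fin n))
    (x : Fin n → Option (Fin n)) : Prop :=
  ∃ y : Fin m, ∀ q v, x q = some v → v ∈ δ q y

/-!
A D3-directing word `w` of `A` with common target `r` is turned, letter by letter, into a word of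
`Split(A)` of the same length: at each step keep, for every current state, only one successor that
still reaches `r` along the rest of `w`. Conversely every letter of `Split(A)` lies below a letter
of `A`, so a carefully synchronizing word of `Split(A)` maps each singleton `{q}` into `{r}` and
lifts to a word of `A` of the same length whose run from every `q` contains `r`. Hence both
automata have the same set of lengths of synchronizing words, and in particular the same minimum.
-/

section NFA

variable {n m : ℕ} (δ : Fin n → Fin m → Finset (Fin n))

theorem nfaRun_eq_biUnion (w : List (Fin m)) (S : Finset (Fin n)) :
    nfaRun δ S w = S.biUnion fun q => nfaRun δ {q} w := by
  induction w generalizing S with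
  | nil => simp [nfaRun]
  | cons a w ih =>
    simp only [nfaRun, Finset.singleton_biUnion]
    rw [ih, Finset.biUnion_biUnion]
    simp only [← ih]

theorem mem_nfaRun_iff (w : List (Fin m)) (S : Finset (Fin n)) (r : Fin n) :
    r ∈ nfaRun δ S w ↔ ∃ q ∈ S, r ∈ nfaRun δ {q} w := by
  rw [nfaRun_eq_biUnion, Finset.mem_biUnion]

theorem nfaRun_mono (w : List (Fin m)) {S T : Finset (Fin n)} (h : S ⊆ T) :
    nfaRun δ S w ⊆ nfaRun δ T w := by
  rw [nfaRun_eq_biUnion, nfaRun_eq_biUnion δ w T]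
  exact Finset.biUnion_subset_biUnion_of_subset_left _ h

end NFA

section PFA

variable {n : ℕ}

@[simp]
theorem pfaRunF_empty (w : List (Fin n → Option (Fin n))) : pfaRunF ∅ w = ∅ := by
  induction w with
  | nil => rfl
  | cons x w ih => simpa [pfaRunF] using ih

theorem pfaRunF_cons_of_isSome {S : Finset (Fin n)} {x : Fin n → Option (Fin n)}
    (hx : ∀ q ∈ S, (x q).isSome) (w : List (Fin n → Option (Fin n))) :
    pfaRunF S (x :: w) = pfaRunF (S.image fun q => (x q).getD q) w := by
  rw [pfaRunF, if_pos hx]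

theorem pfaRunF_nonempty_and_subset_of_subset (w : List (Fin n → Option (Fin n)))
    {S T : Finset (Fin n)} (hTS : T ⊆ S) (hT : T.Nonempty) (hS : (pfaRunF S w).Nonempty) :
    (pfaRunF T w).Nonempty ∧ pfaRunF T w ⊆ pfaRunF S w := by
  induction w generalizing S T with
  | nil => exact ⟨hT, hTS⟩
  | cons x w ih =>
    have hxS : ∀ q ∈ S, (x q).isSome := by
      by_contra h
      simp [pfaRunF, if_neg h] at hS
    rw [pfaRunF_cons_of_isSome hxS] at hS ⊢
    rw [pfaRunF_cons_of_isSome fun q hq => hxS q (hTS hq)]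
    exact ih (Finset.image_subset_image hTS) (hT.image _) hS

end PFA

section Split

variable {n m : ℕ} (δ : Fin n → Fin m → Finset (Fin n))

theorem splitSym_restrict {S : Finset (Fin n)} {f : Fin n → Fin n} {a : Fin m}
    (hf : ∀ q ∈ S, f q ∈ δ q a) :
    splitSym δ fun q => if q ∈ S then some (f q) else none :=
  ⟨a, fun q v hv => by
    simp only at hv
    split_ifs at hv with hq
    exact Option.some_injective _ hv ▸ hf q hq⟩

theorem pfaRunF_cons_restrict (S : Finset (Fin n)) (f : Fin n → Fin n)
    (w : List (Fin n → Option (Fin n))) :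
    pfaRunF S ((fun q => if q ∈ S then some (f q) else none) :: w) = pfaRunF (S.image f) w := by
  rw [pfaRunF_cons_of_isSome fun q hq => by simp [hq]]
  congr 1
  exact Finset.image_congr fun q hq => by simp [Finset.mem_coe.1 hq]

theorem exists_split_word_of_forall_mem_nfaRun (w : List (Fin m)) {S : Finset (Fin n)}
    {r : Fin n} (hS : S.Nonempty) (hr : ∀ q ∈ S, r ∈ nfaRun δ {q} w) :
    ∃ w' : List (Fin n → Option (Fin n)), w'.length = w.length ∧
      (∀ x ∈ w', splitSym δ x) ∧ pfaRunF S w' = {r} := by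
  induction w generalizing S with
  | nil =>
    refine ⟨[], rfl, by simp, ?_⟩
    exact Finset.eq_singleton_iff_nonempty_unique_mem.2
      ⟨hS, fun q hq => (Finset.mem_singleton.1 (hr q hq)).symm⟩
  | cons a w ih =>
    have hstep : ∀ q ∈ S, ∃ p ∈ δ q a, r ∈ nfaRun δ {p} w := fun q hq =>
      (mem_nfaRun_iff δ w _ r).1 (by simpa [nfaRun] using hr q hq)
    choose! f hfδ hfr using hstep
    obtain ⟨w', hlen, hsplit, hrun⟩ :=
      ih (hS.image f) fun p hp => by
        obtain ⟨q, hq, rfl⟩ := Finset.mem_image.1 hp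
        exact hfr q hq
    refine ⟨_ :: w', by simp [hlen], ?_, by rwa [pfaRunF_cons_restrict]⟩
    simpa [splitSym_restrict δ hfδ] using hsplit

theorem exists_nfa_word_of_split_word (w' : List (Fin n → Option (Fin n)))
    (hsplit : ∀ x ∈ w', splitSym δ x) :
    ∃ w : List (Fin m), w.length = w'.length ∧
      ∀ S : Finset (Fin n), pfaRunF S w' ⊆ nfaRun δ S w := by
  induction w' with
  | nil => exact ⟨[], rfl, fun S => by simp [pfaRunF, nfaRun]⟩
  | cons x w' ih =>
    obtain ⟨y, hy⟩ := hsplit x (by simp)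
    obtain ⟨w, hlen, hsub⟩ := ih fun z hz => hsplit z (by simp [hz])
    refine ⟨y :: w, by simp [hlen], fun S => ?_⟩
    have hstep : (if ∀ q ∈ S, (x q).isSome then S.image (fun q => (x q).getD q) else ∅) ⊆
        S.biUnion fun q => δ q y := by
      split_ifs with hx
      · intro p hp
        obtain ⟨q, hq, rfl⟩ := Finset.mem_image.1 hp
        obtain ⟨v, hv⟩ := Option.isSome_iff_exists.1 (hx q hq)
        exact Finset.mem_biUnion.2 ⟨q, hq, by simpa [hv] using hy q v hv⟩
      · exact Finset.empty_subset _
    exact (hsub _).trans (nfaRun_mono δ w hstep)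

theorem exists_nfaD3word_length_iff (l : ℕ) :
    (∃ w, w.length = l ∧ nfaD3word δ w) ↔
      ∃ w' : List (Fin n → Option (Fin n)), w'.length = l ∧
        (∀ x ∈ w', splitSym δ x) ∧ (pfaRunF Finset.univ w').card = 1 := by
  constructor
  · rintro ⟨w, rfl, r, hr⟩
    obtain ⟨w', hlen, hsplit, hrun⟩ := exists_split_word_of_forall_mem_nfaRun δ w
      (Finset.univ_nonempty_iff.2 ⟨r⟩) fun q _ => hr q
    exact ⟨w', hlen, hsplit, by simp [hrun]⟩
  · rintro ⟨w', rfl, hsplit, hcard⟩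
    obtain ⟨r, hr⟩ := Finset.card_eq_one.1 hcard
    obtain ⟨w, hlen, hsub⟩ := exists_nfa_word_of_split_word δ w' hsplit
    refine ⟨w, hlen, r, fun q => ?_⟩
    obtain ⟨⟨p, hp⟩, hpr⟩ := pfaRunF_nonempty_and_subset_of_subset w'
      (Finset.subset_univ {q}) (Finset.singleton_nonempty q) (by simp [hr])
    obtain rfl : p = r := by simpa [hr] using hpr hp
    exact hsub {q} hp

end Split

theorem stmt15 (n m : ℕ) (δ : Fin n → Fin m → Finset (Fin n)) :
    -- A is D3-directing iff Split(A) carefully synchronizes its full state set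
    ((∃ w, nfaD3word δ w) ↔
      (∃ w : List (Fin n → Option (Fin n)), (∀ x ∈ w, splitSym δ x) ∧
        (pfaRunF Finset.univ w).card = 1)) ∧
    -- and in that case d₃(A) = d₃(Split(A))
    ((∃ w, nfaD3word δ w) →
      sInf {l : ℕ | ∃ w, w.length = l ∧ nfaD3word δ w} =
        sInf {l : ℕ | ∃ w : List (Fin n → Option (Fin n)), w.length = l ∧
          (∀ x ∈ w, splitSym δ x) ∧ (pfaRunF Finset.univ w).card = 1}) := by
  refine ⟨⟨fun ⟨w, hw⟩ => ?_, fun ⟨w', hsplit, hcard⟩ => ?_⟩,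
    fun _ => congrArg sInf (Set.ext (exists_nfaD3word_length_iff δ))⟩
  · obtain ⟨w', -, hw'⟩ := (exists_nfaD3word_length_iff δ w.length).1 ⟨w, rfl, hw⟩
    exact ⟨w', hw'⟩
  · obtain ⟨w, -, hw⟩ := (exists_nfaD3word_length_iff δ w'.length).2 ⟨w', rfl, hsplit, hcard⟩
    exact ⟨w, hw⟩
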